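/- Let q>1 and s≥0, and let E be a complex Banach algebra. If both ∑_{p≥0} a_p t^p and ∑_{p≥0} b_p t^p belong to E[[t]]_{q,s}, then their Cauchy product ∑_{p≥0} (∑_{k=0}^{p} a_k·b_{p−k}) t^p also belongs to E[[t]]_{q,s}; in particular, E[[t]]_{q,s} is a differential algebra when E is a Banach algebra and s≥0. -/

import Mathlib

/-!
For the weight `w_{B,α}(p) = B^p (p!)^α q^{s p(p-1)/2}` one has
`w_{B₁,α₁}(k) · w_{B₂,α₂}(m) ≤ w_{max B₁ B₂, α₁⁺ + α₂⁺}(k + m)`: powers of `B` multiply, factorials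
are monotone, and `p ↦ p(p-1)/2` is superadditive, which is where `q ≥ 1` and `s ≥ 0` enter.
Hence each of the `p + 1` terms of the Cauchy product is bounded by the same weight at `p`, and
the factor `p + 1 ≤ 2^p` is absorbed by doubling `B`.
-/

open Finset

theorem Nat.mul_sub_one_add_mul_sub_one_le (k m : ℕ) :
    k * (k - 1) + m * (m - 1) ≤ (k + m) * (k + m - 1) := by
  cases k <;> cases m <;> simp; nlinarith

theorem Nat.factorial_rpow_le {k n : ℕ} (hkn : k ≤ n) (α : ℝ) :
    (k.factorial : ℝ) ^ α ≤ (n.factorial : ℝ) ^ max α 0 := by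
  have hk : (1 : ℝ) ≤ k.factorial := by exact_mod_cast k.factorial_pos
  calc (k.factorial : ℝ) ^ α ≤ (k.factorial : ℝ) ^ max α 0 :=
        Real.rpow_le_rpow_of_exponent_le hk (le_max_left _ _)
    _ ≤ (n.factorial : ℝ) ^ max α 0 :=
        Real.rpow_le_rpow (by positivity) (by exact_mod_cast Nat.factorial_le hkn) (le_max_right _ _)

theorem Nat.factorial_rpow_mul_factorial_rpow_le (k m : ℕ) (α₁ α₂ : ℝ) :
    (k.factorial : ℝ) ^ α₁ * (m.factorial : ℝ) ^ α₂ ≤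
      ((k + m).factorial : ℝ) ^ (max α₁ 0 + max α₂ 0) := by
  rw [Real.rpow_add (by positivity)]
  exact mul_le_mul (factorial_rpow_le (by omega) α₁) (factorial_rpow_le (by omega) α₂)
    (by positivity) (by positivity)

theorem pow_mul_pow_le_max_pow {B₁ B₂ : ℝ} (hB₁ : 0 ≤ B₁) (hB₂ : 0 ≤ B₂) (k m : ℕ) :
    B₁ ^ k * B₂ ^ m ≤ max B₁ B₂ ^ (k + m) := by
  rw [pow_add]
  exact mul_le_mul (pow_le_pow_left₀ hB₁ (le_max_left _ _) _)
    (pow_le_pow_left₀ hB₂ (le_max_right _ _) _) (by positivity) (by positivity)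

noncomputable def qGevreyWeight (q s B α : ℝ) (p : ℕ) : ℝ :=
  B ^ p * (p.factorial : ℝ) ^ α * q ^ (s * ((p * (p - 1) : ℕ) : ℝ) / 2)

/-- `∑ a_p t^p ∈ E[[t]]_{q,s}`. -/
def IsQGevrey {E : Type*} [Norm E] (q s : ℝ) (a : ℕ → E) : Prop :=
  ∃ A B α : ℝ, 0 < A ∧ 0 < B ∧ ∀ p : ℕ, ‖a p‖ ≤ A * qGevreyWeight q s B α p

section Weight

variable {q s : ℝ}

theorem qGevreyWeight_two_mul (B α : ℝ) (p : ℕ) :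
    qGevreyWeight q s (2 * B) α p = 2 ^ p * qGevreyWeight q s B α p := by
  simp only [qGevreyWeight, mul_pow]
  ring

theorem rpow_mul_triangular_mul_le (hq : 1 ≤ q) (hs : 0 ≤ s) (k m : ℕ) :
    q ^ (s * ((k * (k - 1) : ℕ) : ℝ) / 2) * q ^ (s * ((m * (m - 1) : ℕ) : ℝ) / 2) ≤
      q ^ (s * (((k + m) * (k + m - 1) : ℕ) : ℝ) / 2) := by
  rw [← Real.rpow_add (by linarith)]
  apply Real.rpow_le_rpow_of_exponent_le hq
  have h : ((k * (k - 1) : ℕ) : ℝ) + ((m * (m - 1) : ℕ) : ℝ) ≤ (((k + m) * (k + m - 1) : ℕ) : ℝ) := by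
    exact_mod_cast Nat.mul_sub_one_add_mul_sub_one_le k m
  nlinarith

theorem qGevreyWeight_mul_le (hq : 1 ≤ q) (hs : 0 ≤ s) {B₁ B₂ : ℝ} (hB₁ : 0 ≤ B₁)
    (hB₂ : 0 ≤ B₂) (α₁ α₂ : ℝ) (k m : ℕ) :
    qGevreyWeight q s B₁ α₁ k * qGevreyWeight q s B₂ α₂ m ≤
      qGevreyWeight q s (max B₁ B₂) (max α₁ 0 + max α₂ 0) (k + m) := by
  unfold qGevreyWeight
  calc _ = (B₁ ^ k * B₂ ^ m) * ((k.factorial : ℝ) ^ α₁ * (m.factorial : ℝ) ^ α₂) *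
          (q ^ (s * ((k * (k - 1) : ℕ) : ℝ) / 2) * q ^ (s * ((m * (m - 1) : ℕ) : ℝ) / 2)) := by
        ring
    _ ≤ _ := by
        gcongr
        · exact pow_mul_pow_le_max_pow hB₁ hB₂ k m
        · exact Nat.factorial_rpow_mul_factorial_rpow_le k m α₁ α₂
        · exact rpow_mul_triangular_mul_le hq hs k m

end Weight

theorem IsQGevrey.cauchyProduct {E : Type*} [NonUnitalSeminormedRing E] {q s : ℝ} (hq : 1 ≤ q)
    (hs : 0 ≤ s) {a b : ℕ → E} (ha : IsQGevrey q s a) (hb : IsQGevrey q s b) :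
    IsQGevrey q s fun p => ∑ k ∈ range (p + 1), a k * b (p - k) := by
  obtain ⟨A₁, B₁, α₁, hA₁, hB₁, ha⟩ := ha
  obtain ⟨A₂, B₂, α₂, hA₂, hB₂, hb⟩ := hb
  set B := max B₁ B₂
  set α := max α₁ 0 + max α₂ 0
  refine ⟨A₁ * A₂, 2 * B, α, by positivity, by positivity, fun p => ?_⟩
  have hterm : ∀ k ∈ range (p + 1), ‖a k * b (p - k)‖ ≤ A₁ * A₂ * qGevreyWeight q s B α p := by
    intro k hk
    have hkp : k + (p - k) = p := Nat.add_sub_cancel' (mem_range_succ_iff.mp hk)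
    calc ‖a k * b (p - k)‖ ≤ ‖a k‖ * ‖b (p - k)‖ := norm_mul_le _ _
      _ ≤ (A₁ * qGevreyWeight q s B₁ α₁ k) * (A₂ * qGevreyWeight q s B₂ α₂ (p - k)) :=
          mul_le_mul (ha k) (hb (p - k)) (norm_nonneg _) ((norm_nonneg _).trans (ha k))
      _ = A₁ * A₂ * (qGevreyWeight q s B₁ α₁ k * qGevreyWeight q s B₂ α₂ (p - k)) := by ring
      _ ≤ A₁ * A₂ * qGevreyWeight q s B α p := by
          gcongr
          simpa only [hkp] using qGevreyWeight_mul_le hq hs hB₁.le hB₂.le α₁ α₂ k (p - k)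
  have hp : ((p + 1 : ℕ) : ℝ) ≤ 2 ^ p := by exact_mod_cast Nat.lt_two_pow_self
  calc ‖∑ k ∈ range (p + 1), a k * b (p - k)‖
      ≤ ∑ _k ∈ range (p + 1), A₁ * A₂ * qGevreyWeight q s B α p := norm_sum_le_of_le _ hterm
    _ = ((p + 1 : ℕ) : ℝ) * (A₁ * A₂ * qGevreyWeight q s B α p) := by
        rw [sum_const, card_range, nsmul_eq_mul]
    _ ≤ 2 ^ p * (A₁ * A₂ * qGevreyWeight q s B α p) :=
        mul_le_mul_of_nonneg_right hp ((norm_nonneg _).trans (hterm 0 (by simp)))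
    _ = A₁ * A₂ * qGevreyWeight q s (2 * B) α p := by
        rw [qGevreyWeight_two_mul]
        ring

theorem stmt3 {E : Type*} [NormedRing E]
    (q s : ℝ) (hq : 1 < q) (hs : 0 ≤ s) (a b : ℕ → E)
    (ha : ∃ A B α : ℝ, 0 < A ∧ 0 < B ∧ ∀ p : ℕ,
        ‖a p‖ ≤ A * B ^ p * (p.factorial : ℝ) ^ α * q ^ (s * ((p * (p - 1) : ℕ) : ℝ) / 2))
    (hb : ∃ A B α : ℝ, 0 < A ∧ 0 < B ∧ ∀ p : ℕ,
        ‖b p‖ ≤ A * B ^ p * (p.factorial : ℝ) ^ α * q ^ (s * ((p * (p - 1) : ℕ) : ℝ) / 2)) :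
    ∃ A B α : ℝ, 0 < A ∧ 0 < B ∧ ∀ p : ℕ,
        ‖∑ k ∈ Finset.range (p + 1), a k * b (p - k)‖ ≤
          A * B ^ p * (p.factorial : ℝ) ^ α * q ^ (s * ((p * (p - 1) : ℕ) : ℝ) / 2) := by
  have h := IsQGevrey.cauchyProduct (q := q) (s := s) (a := a) (b := b) hq.le hs
  simp only [IsQGevrey, qGevreyWeight, ← mul_assoc] at h
  exact h ha hb
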